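/- arXiv:1603.03158 — 5 statements merged into one kernel-verified Lean document; each statement's English description precedes it below -/
import Mathlib

section
/- If g1 and g2 are monotone submodular utility functions on (Γ ∪ {*})^n with values bounded by Q1 and Q2 respectively, then the function g defined by g(b) = Q1·Q2 − (Q1 − g1(b))(Q2 − g2(b)) is submodular. -/
/-- `b_{i←γ}`: the partial realization `b` with coordinate `i` set to state `γ`. -/
def updPR {Γ : Type*} {n : ℕ} (b : Fin n → Option Γ) (i : Fin n) (γ : Γ) :
    Fin n → Option Γ := Function.update b i (some γ)

/-- `b' ⪰ b`: `b'` extends `b`, agreeing with `b` wherever `b` is not `*`. -/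
def ExtPR {Γ : Type*} {n : ℕ} (b b' : Fin n → Option Γ) : Prop :=
  ∀ i, b i ≠ none → b' i = b i


open Classical in
lemma extMonoPR {Γ : Type*} {n : ℕ} (g : (Fin n → Option Γ) → ℤ)
    (hmono : ∀ (b : Fin n → Option Γ) (i : Fin n) (γ : Γ), b i = none →
      g b ≤ g (updPR b i γ)) :
    ∀ b b', ExtPR b b' → g b ≤ g b' := by
  have key : ∀ (k : ℕ) (b b' : Fin n → Option Γ),
      (Finset.univ.filter (fun i => b i ≠ b' i)).card = k → ExtPR b b' → g b ≤ g b' := by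
    intro k
    induction k with
    | zero =>
      intro b b' hc _
      have hb : b = b' := by
        funext i
        by_contra hne
        have : i ∈ Finset.univ.filter (fun i => b i ≠ b' i) := by simp [hne]
        rw [Finset.card_eq_zero] at hc
        simp [hc] at this
      rw [hb]
    | succ k ih =>
      intro b b' hc hext
      have hne : (Finset.univ.filter (fun i => b i ≠ b' i)).Nonempty := by
        rw [← Finset.card_pos, hc]; omega
      obtain ⟨i, hi⟩ := hne
      simp only [Finset.mem_filter] at hi
      have hbi : b i = none := by
        by_contra h
        exact hi.2 (hext i h).symm
      obtain ⟨γ, hγ⟩ : ∃ γ, b' i = some γ := by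
        cases h : b' i with
        | none => exact absurd (hbi.trans h.symm) hi.2
        | some γ => exact ⟨γ, rfl⟩
      have hext2 : ExtPR (updPR b i γ) b' := by
        intro j hj
        by_cases hji : j = i
        · subst hji; simp [updPR, hγ]
        · simp only [updPR, Function.update_of_ne hji] at hj ⊢
          exact hext j hj
      have hcard : (Finset.univ.filter (fun j => updPR b i γ j ≠ b' j)).card = k := by
        have hsub : Finset.univ.filter (fun j => updPR b i γ j ≠ b' j)
            = (Finset.univ.filter (fun j => b j ≠ b' j)).erase i := by
          ext j
          simp only [Finset.mem_filter, Finset.mem_erase, Finset.mem_univ, true_and]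
          constructor
          · intro hj
            have hji : j ≠ i := by
              intro h; subst h; simp [updPR, hγ] at hj
            exact ⟨hji, by simpa [updPR, Function.update_of_ne hji] using hj⟩
          · intro ⟨hji, hj⟩
            simpa [updPR, Function.update_of_ne hji] using hj
        rw [hsub, Finset.card_erase_of_mem (by simp [hi.2]), hc]; omega
      calc g b ≤ g (updPR b i γ) := hmono b i γ hbi
        _ ≤ g b' := ih _ _ hcard hext2
  intro b b' hext
  exact key _ b b' rfl hext

/-- If `g1`, `g2` are monotone submodular utility functions with values in `[0,Q1]` and
`[0,Q2]`, then the OR-combination `b ↦ Q1*Q2 - (Q1 - g1 b) * (Q2 - g2 b)` is submodular: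
marginal gains are non-increasing under extension. -/
theorem stmt_1 {Γ : Type*} {n : ℕ} (Q1 Q2 : ℤ)
    (g1 g2 : (Fin n → Option Γ) → ℤ)
    (h1mono : ∀ (b : Fin n → Option Γ) (i : Fin n) (γ : Γ), b i = none →
      g1 b ≤ g1 (updPR b i γ))
    (h2mono : ∀ (b : Fin n → Option Γ) (i : Fin n) (γ : Γ), b i = none →
      g2 b ≤ g2 (updPR b i γ))
    (h1sub : ∀ (b b' : Fin n → Option Γ) (i : Fin n) (γ : Γ), ExtPR b b' →
      b i = none → b' i = none →
      g1 (updPR b' i γ) - g1 b' ≤ g1 (updPR b i γ) - g1 b)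
    (h2sub : ∀ (b b' : Fin n → Option Γ) (i : Fin n) (γ : Γ), ExtPR b b' →
      b i = none → b' i = none →
      g2 (updPR b' i γ) - g2 b' ≤ g2 (updPR b i γ) - g2 b)
    (h1nn : ∀ b, 0 ≤ g1 b) (h1ub : ∀ b, g1 b ≤ Q1)
    (h2nn : ∀ b, 0 ≤ g2 b) (h2ub : ∀ b, g2 b ≤ Q2) :
    ∀ (b b' : Fin n → Option Γ) (i : Fin n) (γ : Γ), ExtPR b b' →
      b i = none → b' i = none →
      (Q1 * Q2 - (Q1 - g1 (updPR b' i γ)) * (Q2 - g2 (updPR b' i γ))) -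
          (Q1 * Q2 - (Q1 - g1 b') * (Q2 - g2 b')) ≤
        (Q1 * Q2 - (Q1 - g1 (updPR b i γ)) * (Q2 - g2 (updPR b i γ))) -
          (Q1 * Q2 - (Q1 - g1 b) * (Q2 - g2 b)) := by
  intro b b' i γ hext hbi hbi'
  have hM1 := extMonoPR g1 h1mono
  have hM2 := extMonoPR g2 h2mono
  have hextu : ExtPR (updPR b i γ) (updPR b' i γ) := by
    intro j hj
    by_cases hji : j = i
    · subst hji; simp [updPR]
    · simp only [updPR, Function.update_of_ne hji] at hj ⊢
      exact hext j hj
  have h1 : g1 b ≤ g1 b' := hM1 b b' hext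
  have h2u : g2 (updPR b i γ) ≤ g2 (updPR b' i γ) := hM2 _ _ hextu
  have d1 : g1 (updPR b' i γ) - g1 b' ≤ g1 (updPR b i γ) - g1 b := h1sub b b' i γ hext hbi hbi'
  have d2 : g2 (updPR b' i γ) - g2 b' ≤ g2 (updPR b i γ) - g2 b := h2sub b b' i γ hext hbi hbi'
  have d1nn : 0 ≤ g1 (updPR b' i γ) - g1 b' := by linarith [h1mono b' i γ hbi']
  have d2nn : 0 ≤ g2 (updPR b' i γ) - g2 b' := by linarith [h2mono b' i γ hbi']
  have q2nn : 0 ≤ Q2 - g2 (updPR b' i γ) := by linarith [h2ub (updPR b' i γ)]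
  have q1nn : 0 ≤ Q1 - g1 b' := by linarith [h1ub b']
  have m1 : (g1 (updPR b' i γ) - g1 b') * (Q2 - g2 (updPR b' i γ))
      ≤ (g1 (updPR b i γ) - g1 b) * (Q2 - g2 (updPR b i γ)) :=
    mul_le_mul d1 (by linarith) q2nn (by linarith)
  have m2 : (g2 (updPR b' i γ) - g2 b') * (Q1 - g1 b')
      ≤ (g2 (updPR b i γ) - g2 b) * (Q1 - g1 b) :=
    mul_le_mul d2 (by linarith) q1nn (by linarith)
  nlinarith [m1, m2]
end

section
/- The weighted elimination function h_W defined by h_W(b) = W − Σ_{a ∈ S : a ⪰ b} w(a), where w : S → ℤ>0 and W = Σ_{a∈S} w(a), is monotone and submodular. -/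
/-- `a ⪰ b`. -/
def compatPR {Γ : Type*} {n : ℕ} (b : Fin n → Option Γ) (a : Fin n → Γ) : Prop :=
  ∀ i, b i ≠ none → b i = some (a i)

instance {Γ : Type*} [DecidableEq Γ] {n : ℕ} (b : Fin n → Option Γ) :
    DecidablePred (compatPR b) := fun _ => by unfold compatPR; infer_instance

/-- `h_W(b) = W − Σ_{a ∈ S : a ⪰ b} w(a)` where `W = Σ_{a ∈ S} w(a)`. -/
def hW {Γ : Type*} [DecidableEq Γ] {n : ℕ} (S : Finset (Fin n → Γ))
    (w : (Fin n → Γ) → ℤ) (b : Fin n → Option Γ) : ℤ :=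
  (∑ a ∈ S, w a) - ∑ a ∈ S.filter (compatPR b), w a

lemma compat_upd {Γ : Type*} {n : ℕ} (b : Fin n → Option Γ) (i : Fin n) (γ : Γ)
    (hb : b i = none) (a : Fin n → Γ) :
    compatPR (updPR b i γ) a ↔ compatPR b a ∧ a i = γ := by
  constructor
  · intro h
    refine ⟨fun j hj => ?_, ?_⟩
    · have hji : j ≠ i := fun e => hj (e ▸ hb)
      have := h j (by simp [updPR, Function.update_of_ne hji, hj])
      simpa [updPR, Function.update_of_ne hji] using this
    · have := h i (by simp [updPR])
      simp only [updPR, Function.update_self, Option.some.injEq] at this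
      exact this.symm
  · rintro ⟨h, rfl⟩ j hj
    rcases eq_or_ne j i with rfl | hji
    · simp [updPR]
    · simpa [updPR, Function.update_of_ne hji] using
        h j (by simpa [updPR, Function.update_of_ne hji] using hj)

lemma compat_mono {Γ : Type*} {n : ℕ} {b b' : Fin n → Option Γ} (h : ExtPR b b')
    {a : Fin n → Γ} (ha : compatPR b' a) : compatPR b a := by
  intro j hj
  have := ha j (by rw [h j hj]; exact hj)
  rwa [h j hj] at this

/-- The weighted elimination function `h_W` is monotone and submodular. -/
theorem stmt_4 {Γ : Type*} [DecidableEq Γ] {n : ℕ} (S : Finset (Fin n → Γ))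
    (w : (Fin n → Γ) → ℤ) (hw : ∀ a ∈ S, 0 < w a) :
    (∀ (b : Fin n → Option Γ) (i : Fin n) (γ : Γ), b i = none →
      hW S w b ≤ hW S w (updPR b i γ)) ∧
    (∀ (b b' : Fin n → Option Γ) (i : Fin n) (γ : Γ), ExtPR b b' →
      b i = none → b' i = none →
      hW S w (updPR b' i γ) - hW S w b' ≤ hW S w (updPR b i γ) - hW S w b) := by
  have key : ∀ (b : Fin n → Option Γ) (i : Fin n) (γ : Γ), b i = none →
      hW S w (updPR b i γ) - hW S w b =
      ∑ a ∈ (S.filter (compatPR b)).filter (fun a => ¬ a i = γ), w a := by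
    intro b i γ hb
    have hf : S.filter (compatPR (updPR b i γ)) =
        (S.filter (compatPR b)).filter (fun a => a i = γ) := by
      rw [Finset.filter_filter]
      apply Finset.filter_congr
      intro a _
      simpa using compat_upd b i γ hb a
    have := Finset.sum_filter_add_sum_filter_not (S.filter (compatPR b))
      (fun a => a i = γ) w
    simp only [hW, hf]
    linarith
  constructor
  · intro b i γ hb
    have := key b i γ hb
    have h0 : 0 ≤ ∑ a ∈ (S.filter (compatPR b)).filter (fun a => ¬ a i = γ), w a :=
      Finset.sum_nonneg fun a ha => by
        have := Finset.mem_filter.1 (Finset.mem_filter.1 ha).1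
        exact le_of_lt (hw a this.1)
    linarith
  · intro b b' i γ hext hb hb'
    rw [key b i γ hb, key b' i γ hb']
    apply Finset.sum_le_sum_of_subset_of_nonneg
    · intro a ha
      simp only [Finset.mem_filter] at ha ⊢
      exact ⟨⟨ha.1.1, compat_mono hext ha.1.2⟩, ha.2⟩
    · intro a ha _
      exact le_of_lt (hw a (Finset.mem_filter.1 (Finset.mem_filter.1 ha).1).1)
end

section
/- For the OR-combined function g_S(b) = Qm − (Q − g(b))(m − h_S(b)), where g is monotone with goal value Q and h_S(b) = m − |{a ∈ S : a ⪰ b}|, the parameter ρ of g_S is at least 1/2. That is, for every partial realization b with g_S(b) < Qm, every item i with b_i = *, and every state γ other than the worst-case state γ_{b,i} (the state minimizing Δg_S(b,i,·)), we have Δg_S(b,i,γ) ≥ (Qm − g_S(b))/2. -/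
/-- `C_b = |{a ∈ S : a ⪰ b}|`. -/
def Cb {Γ : Type*} [DecidableEq Γ] {n : ℕ} (S : Finset (Fin n → Γ))
    (b : Fin n → Option Γ) : ℤ :=
  ((S.filter (compatPR b)).card : ℤ)

/-- The OR-combination `g_S(b) = Qm − (Q − g(b))·C_b` of `g` with
`h_S(b) = m - C_b` (so `m - h_S(b) = C_b`). -/
def gS {Γ : Type*} [DecidableEq Γ] {n : ℕ} (S : Finset (Fin n → Γ)) (Q : ℤ)
    (g : (Fin n → Option Γ) → ℤ) (b : Fin n → Option Γ) : ℤ :=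
  Q * (S.card : ℤ) - (Q - g b) * Cb S b

/-- The parameter `ρ` of `g_S` is at least `1/2`: for every `b` with `g_S(b) < Qm`,
item `i` with `b_i = *`, and state `γ` different from the worst-case state `γ₀`
(the minimizer of `Δg_S(b,i,·)`), we have `Δg_S(b,i,γ) ≥ (Qm − g_S(b))/2`. -/
theorem stmt_5 {Γ : Type*} [DecidableEq Γ] {n : ℕ} (S : Finset (Fin n → Γ)) (Q : ℤ)
    (g : (Fin n → Option Γ) → ℤ)
    (hmono : ∀ (b : Fin n → Option Γ) (i : Fin n) (γ : Γ), b i = none →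
      g b ≤ g (updPR b i γ))
    (hsub : ∀ (b b' : Fin n → Option Γ) (i : Fin n) (γ : Γ), ExtPR b b' →
      b i = none → b' i = none →
      g (updPR b' i γ) - g b' ≤ g (updPR b i γ) - g b)
    (hnn : ∀ b, 0 ≤ g b) (hub : ∀ b, g b ≤ Q)
    (hgoal : ∀ a : Fin n → Γ, g (fun i => some (a i)) = Q) :
    ∀ (b : Fin n → Option Γ) (i : Fin n) (γ₀ γ : Γ), b i = none →
      gS S Q g b < Q * (S.card : ℤ) →
      (∀ γ' : Γ, gS S Q g (updPR b i γ₀) - gS S Q g b ≤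
        gS S Q g (updPR b i γ') - gS S Q g b) →
      γ ≠ γ₀ →
      Q * (S.card : ℤ) - gS S Q g b ≤ 2 * (gS S Q g (updPR b i γ) - gS S Q g b) := by
  intro b i γ₀ γ hb _ hmin hne
  have hcompat : ∀ (δ : Γ) (a : Fin n → Γ),
      compatPR (updPR b i δ) a ↔ compatPR b a ∧ a i = δ := by
    intro δ a
    constructor
    · intro h
      refine ⟨fun j hj => ?_, ?_⟩
      · have hji : j ≠ i := fun e => hj (e ▸ hb)
        have := h j (by simp [updPR, Function.update_of_ne hji, hj])
        rwa [updPR, Function.update_of_ne hji] at this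
      · have := h i (by simp [updPR])
        simpa [updPR] using this.symm
    · rintro ⟨h1, h2⟩ j hj
      by_cases hji : j = i
      · subst hji; simp [updPR, h2]
      · rw [updPR, Function.update_of_ne hji] at hj ⊢
        exact h1 j hj
  -- disjoint subsets
  have hsum : Cb S (updPR b i γ) + Cb S (updPR b i γ₀) ≤ Cb S b := by
    unfold Cb
    have hsub1 : S.filter (compatPR (updPR b i γ)) ∪ S.filter (compatPR (updPR b i γ₀))
        ⊆ S.filter (compatPR b) := by
      intro a ha
      simp only [Finset.mem_union, Finset.mem_filter, hcompat] at ha ⊢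
      rcases ha with ⟨h, h', _⟩ | ⟨h, h', _⟩ <;> exact ⟨h, h'⟩
    have hdisj : Disjoint (S.filter (compatPR (updPR b i γ)))
        (S.filter (compatPR (updPR b i γ₀))) := by
      rw [Finset.disjoint_left]
      intro a ha ha'
      simp only [Finset.mem_filter, hcompat] at ha ha'
      exact hne (ha.2.2 ▸ ha'.2.2.symm ▸ rfl)
    have := Finset.card_le_card hsub1
    rw [Finset.card_union_of_disjoint hdisj] at this
    exact_mod_cast this
  have hC0 : (0 : ℤ) ≤ Cb S (updPR b i γ₀) := by unfold Cb; positivity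
  have hC1 : (0 : ℤ) ≤ Cb S (updPR b i γ) := by unfold Cb; positivity
  have hg0 : g b ≤ g (updPR b i γ₀) := hmono b i γ₀ hb
  have hg1 : g b ≤ g (updPR b i γ) := hmono b i γ hb
  have hQb : g b ≤ Q := hub b
  have h1 := hmin γ
  unfold gS at h1 ⊢
  nlinarith [mul_le_mul_of_nonneg_right hg0 hC0, mul_le_mul_of_nonneg_right hg1 hC1,
    mul_le_mul_of_nonneg_left hsum (sub_nonneg.mpr hQb)]
end

section
/- With W_γ = w(b_{i←γ}), U_γ = Δg(b,i,γ), Q̂ = Q − g(b), and W̄_γ = Σ_{γ'≠γ} W_{γ'}, the conditional expected marginal gain of g_W satisfies E[Δg_W(b,i,γ)] = (Σ_γ W_γ·W̄_γ·Q̂ + U_γ·W_γ²)/(Σ_γ W_γ), assuming Σ_γ W_γ > 0. -/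
/-- `w(b) = Σ_{a ∈ S : a ⪰ b} w(a)`. -/
def wgt {Γ : Type*} [DecidableEq Γ] {n : ℕ} (S : Finset (Fin n → Γ))
    (w : (Fin n → Γ) → ℤ) (b : Fin n → Option Γ) : ℤ :=
  ∑ a ∈ S.filter (compatPR b), w a

/-- `h_W(b) = W − w(b)`. -/
def hWf {Γ : Type*} [DecidableEq Γ] {n : ℕ} (S : Finset (Fin n → Γ))
    (w : (Fin n → Γ) → ℤ) (b : Fin n → Option Γ) : ℤ :=
  (∑ a ∈ S, w a) - wgt S w b

/-- `g_W(b) = QW − (Q − g(b))(W − h_W(b))`. -/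
def gWf {Γ : Type*} [DecidableEq Γ] {n : ℕ} (S : Finset (Fin n → Γ))
    (w : (Fin n → Γ) → ℤ) (Q : ℤ) (g : (Fin n → Option Γ) → ℤ)
    (b : Fin n → Option Γ) : ℤ :=
  Q * (∑ a ∈ S, w a) - (Q - g b) * ((∑ a ∈ S, w a) - hWf S w b)

/-- With `W_γ = w(b_{i←γ})`, `U_γ = Δg(b,i,γ)`, `Q̂ = Q − g(b)` and
`W̄_γ = Σ_{γ'≠γ} W_{γ'}`, the conditional expected marginal gain of `g_W` equals
`(Σ_γ W_γ·W̄_γ·Q̂ + U_γ·W_γ²) / (Σ_γ W_γ)`, assuming `Σ_γ W_γ > 0`. -/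
theorem stmt_11 {Γ : Type*} [Fintype Γ] [DecidableEq Γ] {n : ℕ}
    (S : Finset (Fin n → Γ)) (w : (Fin n → Γ) → ℤ) (Q : ℤ)
    (g : (Fin n → Option Γ) → ℤ) (hub : ∀ b, g b ≤ Q)
    (b : Fin n → Option Γ) (i : Fin n) (hi : b i = none)
    (hpos : 0 < ∑ γ : Γ, wgt S w (updPR b i γ)) :
    (∑ γ : Γ, ((wgt S w (updPR b i γ) : ℝ) / (wgt S w b : ℝ)) *
        ((gWf S w Q g (updPR b i γ) : ℝ) - (gWf S w Q g b : ℝ))) =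
      (∑ γ : Γ, ((wgt S w (updPR b i γ) : ℝ) *
          (∑ γ' ∈ Finset.univ.erase γ, (wgt S w (updPR b i γ') : ℝ)) *
          ((Q : ℝ) - (g b : ℝ)) +
        ((g (updPR b i γ) : ℝ) - (g b : ℝ)) * (wgt S w (updPR b i γ) : ℝ) ^ 2)) /
      (∑ γ : Γ, (wgt S w (updPR b i γ) : ℝ)) := by
  classical
  have hfilter : ∀ γ : Γ, S.filter (compatPR (updPR b i γ)) =
      (S.filter (compatPR b)).filter (fun a => a i = γ) := by
    intro γ
    ext a
    simp only [Finset.mem_filter, and_assoc]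
    constructor
    · rintro ⟨ha, hc⟩
      refine ⟨ha, ?_, ?_⟩
      · intro j hj
        have hji : j ≠ i := by rintro rfl; rw [hi] at hj; exact hj rfl
        have := hc j (by rw [updPR, Function.update_of_ne hji]; exact hj)
        rwa [updPR, Function.update_of_ne hji] at this
      · have := hc i (by simp [updPR])
        simp only [updPR, Function.update_self, Option.some.injEq] at this
        exact this.symm
    · rintro ⟨ha, hc, hai⟩
      refine ⟨ha, fun j hj => ?_⟩
      by_cases hji : j = i
      · subst hji; simp [updPR, hai]
      · rw [updPR, Function.update_of_ne hji] at hj ⊢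
        exact hc j hj
  have key : wgt S w b = ∑ γ : Γ, wgt S w (updPR b i γ) := by
    unfold wgt
    simp_rw [hfilter]
    rw [Finset.sum_fiberwise (S.filter (compatPR b)) (fun a => a i) w]
  have hT : (0:ℝ) < ∑ γ : Γ, (wgt S w (updPR b i γ) : ℝ) := by exact_mod_cast hpos
  have hb : (wgt S w b : ℝ) = ∑ γ' : Γ, (wgt S w (updPR b i γ') : ℝ) := by
    rw [key]; push_cast; rfl
  rw [eq_div_iff hT.ne', Finset.sum_mul]
  refine Finset.sum_congr rfl fun γ _ => ?_
  have he : ∑ γ' ∈ Finset.univ.erase γ, (wgt S w (updPR b i γ') : ℝ)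
      = (∑ γ' : Γ, (wgt S w (updPR b i γ') : ℝ)) - (wgt S w (updPR b i γ) : ℝ) :=
    Finset.sum_erase_eq_sub (Finset.mem_univ γ)
  unfold gWf hWf
  push_cast
  rw [hb, he]
  field_simp
  ring
end

section
/- Monotone-path comparison lemma: suppose W'_γ ≤ W_γ, 0 ≤ U'_γ ≤ U_γ, 0 ≤ Q̂' ≤ Q̂, U_γ ≤ Q̂, U'_γ ≤ Q̂' for all γ ∈ Γ, with Σ_γ W'_γ > 0. Then (Σ_γ Q̂·W̄_γ·W_γ + U_γ·W_γ²)/(Σ_γ W_γ) ≥ (Σ_γ Q̂'·W̄'_γ·W'_γ + U'_γ·W'_γ²)/(Σ_γ W'_γ), where W̄_γ = Σ_{γ'≠γ} W_{γ'} and similarly for W̄'_γ. -/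
open Finset

private lemma my_onecoord (T w w' c Q R : ℝ) (hT : 0 ≤ T) (hw' : 0 ≤ w') (hww : w' ≤ w)
    (hc : 0 ≤ c) (hcQ : c ≤ Q) (hR : 0 ≤ R) (hS' : 0 < T + w') :
    (Q * (T + w') ^ 2 - ((c * w' ^ 2) + R)) / (T + w') ≤
      (Q * (T + w) ^ 2 - ((c * w ^ 2) + R)) / (T + w) := by
  have hS : 0 < T + w := by linarith
  rw [div_le_div_iff₀ hS' hS]
  nlinarith [mul_nonneg (sub_nonneg.2 hww) hR,
    mul_nonneg (sub_nonneg.2 hww) (mul_nonneg (mul_nonneg (sub_nonneg.2 hcQ) hS'.le)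
      (le_trans hw' hww)),
    mul_nonneg (sub_nonneg.2 hww) (mul_nonneg (mul_nonneg (le_trans hc hcQ) hT) hT),
    mul_nonneg (sub_nonneg.2 hww) (mul_nonneg (mul_nonneg (sub_nonneg.2 hcQ) hw') hT)]

private lemma my_sum_sq_le {Γ : Type*} [Fintype Γ] (f : Γ → ℝ) (hf : ∀ γ, 0 ≤ f γ) :
    ∑ γ, (f γ) ^ 2 ≤ (∑ γ, f γ) ^ 2 := by
  calc ∑ γ, (f γ) ^ 2 ≤ ∑ γ, f γ * (∑ γ', f γ') := by
        refine Finset.sum_le_sum fun γ _ => ?_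
        have h := Finset.single_le_sum (fun i _ => hf i) (Finset.mem_univ γ)
        nlinarith [hf γ]
    _ = (∑ γ, f γ) ^ 2 := by rw [← Finset.sum_mul]; ring

private lemma my_rewrite {Γ : Type*} [Fintype Γ] [DecidableEq Γ] (V U : Γ → ℝ) (Q : ℝ) :
    ∑ γ, (Q * (∑ γ' ∈ Finset.univ.erase γ, V γ') * V γ + U γ * (V γ) ^ 2) =
      Q * (∑ γ, V γ) ^ 2 - ∑ γ, (Q - U γ) * (V γ) ^ 2 := by
  have h : ∀ γ : Γ, ∑ γ' ∈ Finset.univ.erase γ, V γ' = (∑ γ', V γ') - V γ :=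
    fun γ => Finset.sum_erase_eq_sub (Finset.mem_univ γ)
  calc ∑ γ, (Q * (∑ γ' ∈ Finset.univ.erase γ, V γ') * V γ + U γ * (V γ) ^ 2)
      = ∑ γ, (Q * (∑ γ', V γ') * V γ - (Q - U γ) * (V γ) ^ 2) := by
        refine Finset.sum_congr rfl fun γ _ => ?_
        rw [h γ]; ring
    _ = Q * (∑ γ, V γ) ^ 2 - ∑ γ, (Q - U γ) * (V γ) ^ 2 := by
        rw [Finset.sum_sub_distrib, ← Finset.mul_sum]
        ring

/-- Monotone-path comparison lemma: if `W'_γ ≤ W_γ`, `0 ≤ U'_γ ≤ U_γ`,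
`0 ≤ Q̂' ≤ Q̂`, `U_γ ≤ Q̂`, `U'_γ ≤ Q̂'` for all `γ`, and `Σ_γ W'_γ > 0`, then
`(Σ_γ Q̂·W̄_γ·W_γ + U_γ·W_γ²)/(Σ_γ W_γ) ≥ (Σ_γ Q̂'·W̄'_γ·W'_γ + U'_γ·W'_γ²)/(Σ_γ W'_γ)`,
where `W̄_γ = Σ_{γ'≠γ} W_{γ'}` (and similarly `W̄'_γ`). -/
theorem stmt_14 {Γ : Type*} [Fintype Γ] [DecidableEq Γ]
    (W W' U U' : Γ → ℝ) (Qh Qh' : ℝ)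
    (hW' : ∀ γ, 0 ≤ W' γ) (hWW : ∀ γ, W' γ ≤ W γ)
    (hU' : ∀ γ, 0 ≤ U' γ) (hUU : ∀ γ, U' γ ≤ U γ)
    (hQ' : 0 ≤ Qh') (hQQ : Qh' ≤ Qh)
    (hUQ : ∀ γ, U γ ≤ Qh) (hUQ' : ∀ γ, U' γ ≤ Qh')
    (hpos : 0 < ∑ γ, W' γ) :
    (∑ γ, (Qh' * (∑ γ' ∈ Finset.univ.erase γ, W' γ') * W' γ + U' γ * (W' γ) ^ 2)) /
        (∑ γ, W' γ) ≤
      (∑ γ, (Qh * (∑ γ' ∈ Finset.univ.erase γ, W γ') * W γ + U γ * (W γ) ^ 2)) /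
        (∑ γ, W γ) := by
  rw [my_rewrite W' U' Qh', my_rewrite W U Qh]
  -- Step 1: raise Q and U at fixed W'
  have num1 : Qh' * (∑ γ, W' γ) ^ 2 - ∑ γ, (Qh' - U' γ) * (W' γ) ^ 2 ≤
      Qh * (∑ γ, W' γ) ^ 2 - ∑ γ, (Qh - U γ) * (W' γ) ^ 2 := by
    have h1 : ∑ γ, (Qh - U γ) * (W' γ) ^ 2 - ∑ γ, (Qh' - U' γ) * (W' γ) ^ 2 =
        ∑ γ, ((Qh - U γ) - (Qh' - U' γ)) * (W' γ) ^ 2 := by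
      rw [← Finset.sum_sub_distrib]
      exact Finset.sum_congr rfl fun γ _ => by ring
    have h2 : ∑ γ, ((Qh - U γ) - (Qh' - U' γ)) * (W' γ) ^ 2 ≤
        ∑ γ, (Qh - Qh') * (W' γ) ^ 2 := by
      refine Finset.sum_le_sum fun γ _ => mul_le_mul_of_nonneg_right ?_ (sq_nonneg _)
      linarith [hUU γ]
    have h3 : ∑ γ, (Qh - Qh') * (W' γ) ^ 2 = (Qh - Qh') * ∑ γ, (W' γ) ^ 2 :=
      (Finset.mul_sum _ _ _).symm
    have h4 : (Qh - Qh') * ∑ γ, (W' γ) ^ 2 ≤ (Qh - Qh') * (∑ γ, W' γ) ^ 2 :=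
      mul_le_mul_of_nonneg_left (my_sum_sq_le W' hW') (by linarith)
    linarith
  have step1 : (Qh' * (∑ γ, W' γ) ^ 2 - ∑ γ, (Qh' - U' γ) * (W' γ) ^ 2) / (∑ γ, W' γ) ≤
      (Qh * (∑ γ, W' γ) ^ 2 - ∑ γ, (Qh - U γ) * (W' γ) ^ 2) / (∑ γ, W' γ) :=
    (div_le_div_iff_of_pos_right hpos).mpr num1
  -- Step 2: raise W coordinates one at a time
  have key : ∀ s : Finset Γ,
      (Qh * (∑ γ, W' γ) ^ 2 - ∑ γ, (Qh - U γ) * (W' γ) ^ 2) / (∑ γ, W' γ) ≤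
      (Qh * (∑ γ, (if γ ∈ s then W γ else W' γ)) ^ 2 -
          ∑ γ, (Qh - U γ) * ((if γ ∈ s then W γ else W' γ)) ^ 2) /
        (∑ γ, (if γ ∈ s then W γ else W' γ)) := by
    intro s
    induction s using Finset.induction_on with
    | empty => simp
    | @insert a s ha ih =>
      set V : Γ → ℝ := fun γ => if γ ∈ s then W γ else W' γ with hV
      set Vi : Γ → ℝ := fun γ => if γ ∈ insert a s then W γ else W' γ with hVi
      have hVnn : ∀ γ, 0 ≤ V γ := fun γ => by
        dsimp [V]; split
        · exact (hW' γ).trans (hWW γ)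
        · exact hW' γ
      have hV'le : ∀ γ, W' γ ≤ V γ := fun γ => by
        dsimp [V]; split
        · exact hWW γ
        · exact le_refl _
      have hVa : V a = W' a := by simp [V, ha]
      have hVia : Vi a = W a := by simp [Vi]
      have hagree : ∀ γ ∈ Finset.univ.erase a, Vi γ = V γ := by
        intro γ hγ
        have hne : γ ≠ a := Finset.ne_of_mem_erase hγ
        simp [V, Vi, Finset.mem_insert, hne]
      set T : ℝ := ∑ γ ∈ Finset.univ.erase a, V γ with hT
      set R : ℝ := ∑ γ ∈ Finset.univ.erase a, (Qh - U γ) * (V γ) ^ 2 with hR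
      have hsum : ∑ γ, V γ = T + W' a := by
        rw [hT, Finset.sum_erase_eq_sub (Finset.mem_univ a), hVa]; ring
      have hsum2 : ∑ γ, Vi γ = T + W a := by
        have h1 : ∑ γ ∈ Finset.univ.erase a, Vi γ = T := Finset.sum_congr rfl hagree
        have h2 : ∑ γ ∈ Finset.univ.erase a, Vi γ = (∑ γ, Vi γ) - Vi a :=
          Finset.sum_erase_eq_sub (Finset.mem_univ a)
        rw [h1, hVia] at h2
        linarith
      have hsq : ∑ γ, (Qh - U γ) * (V γ) ^ 2 = (Qh - U a) * (W' a) ^ 2 + R := by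
        rw [hR, Finset.sum_erase_eq_sub (Finset.mem_univ a), hVa]; ring
      have hsq2 : ∑ γ, (Qh - U γ) * (Vi γ) ^ 2 = (Qh - U a) * (W a) ^ 2 + R := by
        have h1 : ∑ γ ∈ Finset.univ.erase a, (Qh - U γ) * (Vi γ) ^ 2 = R :=
          Finset.sum_congr rfl fun γ hγ => by rw [hagree γ hγ]
        have h2 : ∑ γ ∈ Finset.univ.erase a, (Qh - U γ) * (Vi γ) ^ 2 =
            (∑ γ, (Qh - U γ) * (Vi γ) ^ 2) - (Qh - U a) * (Vi a) ^ 2 :=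
          Finset.sum_erase_eq_sub (Finset.mem_univ a)
        rw [h1, hVia] at h2
        linarith
      have hTnn : 0 ≤ T := Finset.sum_nonneg fun γ _ => hVnn γ
      have hSpos : 0 < T + W' a := by
        rw [← hsum]
        exact lt_of_lt_of_le hpos (Finset.sum_le_sum fun γ _ => hV'le γ)
      have hone := my_onecoord T (W a) (W' a) (Qh - U a) Qh R hTnn (hW' a) (hWW a)
        (by linarith [hUQ a]) (by linarith [hU' a, hUU a])
        (Finset.sum_nonneg fun γ _ => mul_nonneg (by linarith [hUQ γ]) (sq_nonneg _)) hSpos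
      refine le_trans ih ?_
      calc (Qh * (∑ γ, V γ) ^ 2 - ∑ γ, (Qh - U γ) * (V γ) ^ 2) / (∑ γ, V γ)
          = (Qh * (T + W' a) ^ 2 - ((Qh - U a) * (W' a) ^ 2 + R)) / (T + W' a) := by
            rw [hsum, hsq]
        _ ≤ (Qh * (T + W a) ^ 2 - ((Qh - U a) * (W a) ^ 2 + R)) / (T + W a) := hone
        _ = (Qh * (∑ γ, Vi γ) ^ 2 - ∑ γ, (Qh - U γ) * (Vi γ) ^ 2) / (∑ γ, Vi γ) := by
            rw [hsum2, hsq2]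
  have keyu := key Finset.univ
  simp only [Finset.mem_univ, if_true] at keyu
  exact le_trans step1 keyu
end
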